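/- Let L, B, T > 0, let D = (0,L)×(−B,B), and let u be smooth on [0,L]×[−B,B]×[0,T], satisfy u_t + (1+u)u_x + u_{xxx} + u_{xyy} = 0 on D×(0,T), and satisfy the boundary conditions u(x,±B,t) = 0 and u(0,y,t) = u(L,y,t) = u_x(L,y,t) = 0. Then for every t ∈ (0,T): d/dt ∫_D (1+x)u² dx dy + ∫_{−B}^{B} u_x(0,y,t)² dy + 3∫_D u_x² dx dy + ∫_D u_y² dx dy − ∫_D u² dx dy = (2/3)∫_D u³ dx dy. -/

import Mathlib

open MeasureTheory Set



noncomputable def px (u : ℝ → ℝ → ℝ → ℝ) : ℝ → ℝ → ℝ → ℝ :=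
  fun x y t => deriv (fun x' => u x' y t) x
noncomputable def py (u : ℝ → ℝ → ℝ → ℝ) : ℝ → ℝ → ℝ → ℝ :=
  fun x y t => deriv (fun y' => u x y' t) y
noncomputable def pt (u : ℝ → ℝ → ℝ → ℝ) : ℝ → ℝ → ℝ → ℝ :=
  fun x y t => deriv (fun t' => u x y t') t

def Unc (u : ℝ → ℝ → ℝ → ℝ) : ℝ × ℝ × ℝ → ℝ := fun p => u p.1 p.2.1 p.2.2

abbrev Sm (f : ℝ × ℝ × ℝ → ℝ) : Prop := ContDiff ℝ ((⊤:ℕ∞) : WithTop ℕ∞) f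

noncomputable abbrev e1 : ℝ × ℝ × ℝ := (1, 0, 0)
noncomputable abbrev e2 : ℝ × ℝ × ℝ := (0, 1, 0)
noncomputable abbrev e3 : ℝ × ℝ × ℝ := (0, 0, 1)

lemma hasDerivAt_ix (y t x : ℝ) : HasDerivAt (fun x' : ℝ => (x', y, t)) e1 x :=
  (hasDerivAt_id x).prodMk (hasDerivAt_const x (y, t))

lemma hasDerivAt_iy (x t y : ℝ) : HasDerivAt (fun y' : ℝ => (x, y', t)) e2 y :=
  (hasDerivAt_const y x).prodMk ((hasDerivAt_id y).prodMk (hasDerivAt_const y t))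

lemma hasDerivAt_it (x y t : ℝ) : HasDerivAt (fun t' : ℝ => (x, y, t')) e3 t :=
  (hasDerivAt_const t x).prodMk ((hasDerivAt_const t y).prodMk (hasDerivAt_id t))

variable {u : ℝ → ℝ → ℝ → ℝ}

lemma hasDerivAt_px (hu : Sm (Unc u)) (x y t : ℝ) :
    HasDerivAt (fun x' => u x' y t) (fderiv ℝ (Unc u) (x, y, t) e1) x :=
  by have h := ((hu.differentiable (by simp) (x, y, t)).hasFDerivAt).comp_hasDerivAt x (hasDerivAt_ix y t x); exact h

lemma hasDerivAt_py (hu : Sm (Unc u)) (x y t : ℝ) :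
    HasDerivAt (fun y' => u x y' t) (fderiv ℝ (Unc u) (x, y, t) e2) y :=
  by have h := ((hu.differentiable (by simp) (x, y, t)).hasFDerivAt).comp_hasDerivAt y (hasDerivAt_iy x t y); exact h

lemma hasDerivAt_pt (hu : Sm (Unc u)) (x y t : ℝ) :
    HasDerivAt (fun t' => u x y t') (fderiv ℝ (Unc u) (x, y, t) e3) t :=
  by have h := ((hu.differentiable (by simp) (x, y, t)).hasFDerivAt).comp_hasDerivAt t (hasDerivAt_it x y t); exact h

lemma px_eq (hu : Sm (Unc u)) (x y t : ℝ) :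
    px u x y t = fderiv ℝ (Unc u) (x, y, t) e1 := (hasDerivAt_px hu x y t).deriv

lemma py_eq (hu : Sm (Unc u)) (x y t : ℝ) :
    py u x y t = fderiv ℝ (Unc u) (x, y, t) e2 := (hasDerivAt_py hu x y t).deriv

lemma pt_eq (hu : Sm (Unc u)) (x y t : ℝ) :
    pt u x y t = fderiv ℝ (Unc u) (x, y, t) e3 := (hasDerivAt_pt hu x y t).deriv

lemma sm_fderiv_apply (hu : Sm (Unc u)) (v : ℝ × ℝ × ℝ) :
    Sm (fun p => fderiv ℝ (Unc u) p v) :=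
  (hu.fderiv_right (by exact_mod_cast le_rfl)).clm_apply contDiff_const

lemma sm_px (hu : Sm (Unc u)) : Sm (Unc (px u)) := by
  have : Unc (px u) = fun p => fderiv ℝ (Unc u) p e1 := by
    funext p; exact px_eq hu p.1 p.2.1 p.2.2
  rw [this]; exact sm_fderiv_apply hu e1

lemma sm_py (hu : Sm (Unc u)) : Sm (Unc (py u)) := by
  have : Unc (py u) = fun p => fderiv ℝ (Unc u) p e2 := by
    funext p; exact py_eq hu p.1 p.2.1 p.2.2
  rw [this]; exact sm_fderiv_apply hu e2

lemma sm_pt (hu : Sm (Unc u)) : Sm (Unc (pt u)) := by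
  have : Unc (pt u) = fun p => fderiv ℝ (Unc u) p e3 := by
    funext p; exact pt_eq hu p.1 p.2.1 p.2.2
  rw [this]; exact sm_fderiv_apply hu e3

lemma two_le_inf : (2 : WithTop ℕ∞) ≤ ((⊤:ℕ∞) : WithTop ℕ∞) := by
  have : ((2:ℕ∞) : WithTop ℕ∞) ≤ ((⊤:ℕ∞) : WithTop ℕ∞) := by exact_mod_cast (le_top : (2:ℕ∞) ≤ ⊤)
  simpa using this

lemma fderiv_fderiv_apply (hu : Sm (Unc u)) (q v w : ℝ × ℝ × ℝ) :
    fderiv ℝ (fun p => fderiv ℝ (Unc u) p v) q w = fderiv ℝ (fderiv ℝ (Unc u)) q w v := by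
  have hd : DifferentiableAt ℝ (fderiv ℝ (Unc u)) q :=
    ((hu.fderiv_right (m := 1) (by exact_mod_cast two_le_inf)).differentiable
      one_ne_zero) q
  rw [fderiv_clm_apply hd (differentiableAt_const v)]
  simp


lemma pypx (hu : Sm (Unc u)) (x y t : ℝ) : py (px u) x y t = px (py u) x y t := by
  have hsymm : IsSymmSndFDerivAt ℝ (Unc u) (x, y, t) :=
    (hu.contDiffAt).isSymmSndFDerivAt (by rw [minSmoothness_of_isRCLikeNormedField]; exact two_le_inf)
  have h1 : Unc (px u) = fun p => fderiv ℝ (Unc u) p e1 := by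
    funext p; exact px_eq hu p.1 p.2.1 p.2.2
  have h2 : Unc (py u) = fun p => fderiv ℝ (Unc u) p e2 := by
    funext p; exact py_eq hu p.1 p.2.1 p.2.2
  calc py (px u) x y t = fderiv ℝ (Unc (px u)) (x, y, t) e2 := py_eq (sm_px hu) x y t
    _ = fderiv ℝ (fun p => fderiv ℝ (Unc u) p e1) (x, y, t) e2 := by rw [h1]
    _ = fderiv ℝ (fderiv ℝ (Unc u)) (x, y, t) e2 e1 := fderiv_fderiv_apply hu _ _ _
    _ = fderiv ℝ (fderiv ℝ (Unc u)) (x, y, t) e1 e2 := hsymm e2 e1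
    _ = fderiv ℝ (fun p => fderiv ℝ (Unc u) p e2) (x, y, t) e1 :=
        (fderiv_fderiv_apply hu _ _ _).symm
    _ = fderiv ℝ (Unc (py u)) (x, y, t) e1 := by rw [h2]
    _ = px (py u) x y t := (px_eq (sm_py hu) x y t).symm

lemma hasDerivAt_px' (hw : Sm (Unc u)) (x y t : ℝ) :
    HasDerivAt (fun x' => u x' y t) (px u x y t) x := by
  rw [px_eq hw]; exact hasDerivAt_px hw x y t

lemma hasDerivAt_py' (hw : Sm (Unc u)) (x y t : ℝ) :
    HasDerivAt (fun y' => u x y' t) (py u x y t) y := by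
  rw [py_eq hw]; exact hasDerivAt_py hw x y t

lemma hasDerivAt_pt' (hw : Sm (Unc u)) (x y t : ℝ) :
    HasDerivAt (fun t' => u x y t') (pt u x y t) t := by
  rw [pt_eq hw]; exact hasDerivAt_pt hw x y t

lemma cont_slice (hw : Sm (Unc u)) (t : ℝ) :
    Continuous (fun p : ℝ × ℝ => u p.1 p.2 t) :=
  hw.continuous.comp (continuous_fst.prodMk (continuous_snd.prodMk continuous_const))

lemma integrableOn_rect {a b c d : ℝ} {g : ℝ × ℝ → ℝ} (hg : Continuous g) :
    IntegrableOn g (Ioo a b ×ˢ Ioo c d) :=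
  (hg.continuousOn.integrableOn_compact (isCompact_Icc.prod isCompact_Icc)).mono_set
    (prod_mono Ioo_subset_Icc_self Ioo_subset_Icc_self)

lemma setInt_eq_iter {a b c d : ℝ} (g : ℝ × ℝ → ℝ) (hg : Continuous g) :
    ∫ p in Ioo a b ×ˢ Ioo c d, g p = ∫ x in Ioo a b, ∫ y in Ioo c d, g (x, y) := by
  have h : IntegrableOn g (Ioo a b ×ˢ Ioo c d) (Measure.prod volume volume) := by
    rw [← MeasureTheory.Measure.volume_eq_prod]; exact integrableOn_rect hg
  rw [MeasureTheory.Measure.volume_eq_prod]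
  exact setIntegral_prod g h

lemma setInt_eq_iter' {a b c d : ℝ} (g : ℝ × ℝ → ℝ) (hg : Continuous g) :
    ∫ p in Ioo a b ×ˢ Ioo c d, g p = ∫ y in Ioo c d, ∫ x in Ioo a b, g (x, y) := by
  have h : Integrable g ((volume.restrict (Ioo a b)).prod (volume.restrict (Ioo c d))) := by
    rw [MeasureTheory.Measure.prod_restrict, ← MeasureTheory.Measure.volume_eq_prod]
    exact integrableOn_rect hg
  rw [MeasureTheory.Measure.volume_eq_prod, ← MeasureTheory.Measure.prod_restrict]
  exact MeasureTheory.integral_prod_symm g h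

lemma integral_Ioo_deriv {f f' : ℝ → ℝ} {a b : ℝ} (hab : a ≤ b)
    (hderiv : ∀ x, HasDerivAt f (f' x) x) (hcont : Continuous f') :
    ∫ x in Ioo a b, f' x = f b - f a := by
  rw [← MeasureTheory.integral_Ioc_eq_integral_Ioo, ← intervalIntegral.integral_of_le hab]
  exact intervalIntegral.integral_eq_sub_of_hasDerivAt (fun x _ => hderiv x)
    (hcont.intervalIntegrable a b)

lemma hasDerivAt_energy (hu : Sm (Unc u)) (L B t : ℝ) :
    HasDerivAt (fun s => ∫ p in Ioo 0 L ×ˢ Ioo (-B) B, (1 + p.1) * u p.1 p.2 s ^ 2)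
      (∫ p in Ioo 0 L ×ˢ Ioo (-B) B, (1 + p.1) * (2 * u p.1 p.2 t * pt u p.1 p.2 t)) t := by
  set S : Set (ℝ × ℝ) := Ioo 0 L ×ˢ Ioo (-B) B with hSdef
  have hSm : MeasurableSet S := (measurableSet_Ioo.prod measurableSet_Ioo)
  have hSsub : S ⊆ Icc 0 L ×ˢ Icc (-B) B :=
    prod_mono Ioo_subset_Icc_self Ioo_subset_Icc_self
  have hSfin : volume S < ⊤ :=
    lt_of_le_of_lt (measure_mono hSsub) (isCompact_Icc.prod isCompact_Icc).measure_lt_top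
  have hcontu : Continuous (Unc u) := hu.continuous
  have hcontt : Continuous (Unc (pt u)) := (sm_pt hu).continuous
  set F' : ℝ → ℝ × ℝ → ℝ := fun s p => (1 + p.1) * (2 * u p.1 p.2 s * pt u p.1 p.2 s) with hF'
  have hproj : Continuous (fun z : (ℝ × ℝ) × ℝ => (z.1.1, z.1.2, z.2)) :=
    (continuous_fst.fst).prodMk ((continuous_fst.snd).prodMk continuous_snd)
  have hF'cont : Continuous (fun z : (ℝ × ℝ) × ℝ => F' z.2 z.1) := by
    apply Continuous.mul
    · exact (continuous_const.add (continuous_fst.fst))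
    · exact (continuous_const.mul (hcontu.comp hproj)).mul (hcontt.comp hproj)
  have hK : IsCompact ((Icc (0:ℝ) L ×ˢ Icc (-B) B) ×ˢ Icc (t - 1) (t + 1)) :=
    (isCompact_Icc.prod isCompact_Icc).prod isCompact_Icc
  obtain ⟨C, hC⟩ := hK.exists_bound_of_continuousOn hF'cont.continuousOn
  have key := hasDerivAt_integral_of_dominated_loc_of_deriv_le (μ := volume.restrict S)
    (F := fun s p => (1 + p.1) * u p.1 p.2 s ^ 2) (F' := F') (bound := fun _ => C)
    (x₀ := t) (s := Metric.ball t 1) (Metric.ball_mem_nhds t one_pos)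
    (Filter.Eventually.of_forall fun s =>
      (Continuous.aestronglyMeasurable (by
        exact (continuous_const.add continuous_fst).mul ((cont_slice hu s).pow 2))))
    (integrableOn_rect ((continuous_const.add continuous_fst).mul ((cont_slice hu t).pow 2)))
    (Continuous.aestronglyMeasurable
      (hF'cont.comp (continuous_id.prodMk continuous_const)))
    ?_ ?_ ?_
  · exact key.2
  · -- bound
    refine (MeasureTheory.ae_restrict_iff' hSm).2 (Filter.Eventually.of_forall fun p hp => ?_)
    intro s hs
    refine hC (p, s) ?_
    refine ⟨hSsub hp, ?_⟩
    rw [Metric.mem_ball, Real.dist_eq] at hs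
    constructor <;> [linarith [abs_lt.1 hs |>.1]; linarith [abs_lt.1 hs |>.2]]
  · exact MeasureTheory.integrableOn_const hSfin.ne
  · refine Filter.Eventually.of_forall fun p => fun s _ => ?_
    have h := ((hasDerivAt_pt' hu p.1 p.2 s).pow 2).const_mul (1 + p.1)
    refine h.congr_deriv ?_
    simp only [hF']
    push_cast
    ring

lemma deriv_zero_on {f : ℝ → ℝ} {c d y : ℝ} (hy : y ∈ Ioo c d)
    (h : ∀ z ∈ Ioo c d, f z = 0) : deriv f y = 0 := by
  have he : f =ᶠ[nhds y] (fun _ => (0:ℝ)) :=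
    Filter.eventuallyEq_of_mem (isOpen_Ioo.mem_nhds hy) h
  rw [he.deriv_eq, deriv_const]

lemma L1 (hu : Sm (Unc u)) (y t x : ℝ) :
    HasDerivAt (fun x' => (1+x')*(u x' y t^2 + 2/3*u x' y t^3)
        + 2*(1+x')*u x' y t*px (px u) x' y t
        - 2*u x' y t*px u x' y t - (1+x')*(px u x' y t)^2 - (1+x')*(py u x' y t)^2)
      (u x y t^2 + 2/3*u x y t^3 + 2*(1+x)*u x y t*(1+u x y t)*px u x y t
        + 2*(1+x)*u x y t*px (px (px u)) x y t - 3*(px u x y t)^2 - (py u x y t)^2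
        - 2*(1+x)*py u x y t*px (py u) x y t) x := by
  have h1x : HasDerivAt (fun x' : ℝ => 1+x') 1 x := by
    simpa using (hasDerivAt_id x).const_add (1:ℝ)
  have h0 := hasDerivAt_px' hu x y t
  have h1 := hasDerivAt_px' (sm_px hu) x y t
  have h2 := hasDerivAt_px' (sm_px (sm_px hu)) x y t
  have hyx := hasDerivAt_px' (sm_py hu) x y t
  have big := ((((h1x.mul ((h0.pow 2).add ((h0.pow 3).const_mul (2/3)))).add
      (((h1x.const_mul 2).mul h0).mul h2)).sub ((h0.const_mul 2).mul h1)).sub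
      (h1x.mul (h1.pow 2))).sub (h1x.mul (hyx.pow 2))
  refine big.congr_deriv ?_
  simp only [Pi.pow_apply, Pi.add_apply, Pi.mul_apply]
  push_cast
  all_goals ring

lemma L2 (hu : Sm (Unc u)) (x t y : ℝ) :
    HasDerivAt (fun y' => 2*(1+x)*u x y' t*px (py u) x y' t)
      (2*(1+x)*py u x y t*px (py u) x y t
        + 2*(1+x)*u x y t*px (py (py u)) x y t) y := by
  have hy0 := hasDerivAt_py' hu x y t
  have hy1 := hasDerivAt_py' (sm_px (sm_py hu)) x y t
  have big := (hy0.const_mul (2*(1+x))).mul hy1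
  have hcomm := pypx (sm_py hu) x y t
  refine big.congr_deriv ?_
  rw [hcomm]
  try ring


set_option maxHeartbeats 2000000 in
/-- The weighted energy identity (7.4), obtained from `((1+x)A₁u, u) = 0`, for the
Zakharov–Kuznetsov equation `u_t + (1+u)u_x + u_{xxx} + u_{xyy} = 0` on the rectangle
`D = (0,L) × (-B,B)` with the boundary conditions (2.2)-(2.3):
`d/dt ∫_D (1+x)u² + ∫_{-B}^{B} u_x(0,y,t)² dy + 3∫_D u_x² + ∫_D u_y² - ∫_D u²
  = (2/3)∫_D u³`. -/
theorem ZK_weighted_energy_identity (L B T : ℝ) (hL : 0 < L) (hB : 0 < B) (hT : 0 < T)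
    (u : ℝ → ℝ → ℝ → ℝ)
    (hu : ContDiff ℝ (⊤ : ℕ∞) (fun p : ℝ × ℝ × ℝ => u p.1 p.2.1 p.2.2))
    (hpde : ∀ x ∈ Ioo 0 L, ∀ y ∈ Ioo (-B) B, ∀ t ∈ Ioo 0 T,
      deriv (fun t' => u x y t') t
        + (1 + u x y t) * deriv (fun x' => u x' y t) x
        + deriv^[3] (fun x' => u x' y t) x
        + deriv (fun x' => deriv^[2] (fun y' => u x' y' t) y) x = 0)
    (hby : ∀ x ∈ Icc 0 L, ∀ t ∈ Icc 0 T, u x (-B) t = 0 ∧ u x B t = 0)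
    (hbx : ∀ y ∈ Icc (-B) B, ∀ t ∈ Icc 0 T,
      u 0 y t = 0 ∧ u L y t = 0 ∧ deriv (fun x' => u x' y t) L = 0) :
    ∀ t ∈ Ioo 0 T,
      deriv (fun s => ∫ x in Ioo 0 L, ∫ y in Ioo (-B) B, (1 + x) * (u x y s) ^ 2) t
        + (∫ y in Ioo (-B) B, (deriv (fun x' => u x' y t) 0) ^ 2)
        + 3 * (∫ x in Ioo 0 L, ∫ y in Ioo (-B) B, (deriv (fun x' => u x' y t) x) ^ 2)
        + (∫ x in Ioo 0 L, ∫ y in Ioo (-B) B, (deriv (fun y' => u x y' t) y) ^ 2)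
        - (∫ x in Ioo 0 L, ∫ y in Ioo (-B) B, (u x y t) ^ 2)
      = 2 / 3 * ∫ x in Ioo 0 L, ∫ y in Ioo (-B) B, (u x y t) ^ 3 := by
  intro t ht
  have hsm : Sm (Unc u) := hu.of_le (by simp)
  have htI : t ∈ Icc 0 T := Ioo_subset_Icc_self ht
  have hpde' : ∀ x ∈ Ioo 0 L, ∀ y ∈ Ioo (-B) B,
      pt u x y t + (1 + u x y t) * px u x y t + px (px (px u)) x y t
        + px (py (py u)) x y t = 0 := by
    intro x hx y hy
    exact hpde x hx y hy t ht
  -- continuity facts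
  have c0 : Continuous (fun p : ℝ × ℝ => u p.1 p.2 t) := cont_slice hsm t
  have cx : Continuous (fun p : ℝ × ℝ => px u p.1 p.2 t) := cont_slice (sm_px hsm) t
  have cy : Continuous (fun p : ℝ × ℝ => py u p.1 p.2 t) := cont_slice (sm_py hsm) t
  have cxxx : Continuous (fun p : ℝ × ℝ => px (px (px u)) p.1 p.2 t) :=
    cont_slice (sm_px (sm_px (sm_px hsm))) t
  have cxy : Continuous (fun p : ℝ × ℝ => px (py u) p.1 p.2 t) :=
    cont_slice (sm_px (sm_py hsm)) t
  have cxyy : Continuous (fun p : ℝ × ℝ => px (py (py u)) p.1 p.2 t) :=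
    cont_slice (sm_px (sm_py (sm_py hsm))) t
  have cone : Continuous (fun p : ℝ × ℝ => 1 + p.1) :=
    continuous_const.add continuous_fst
  have cDPhi : Continuous (fun p : ℝ × ℝ =>
      u p.1 p.2 t^2 + 2/3*u p.1 p.2 t^3
        + 2*(1+p.1)*u p.1 p.2 t*(1+u p.1 p.2 t)*px u p.1 p.2 t
        + 2*(1+p.1)*u p.1 p.2 t*px (px (px u)) p.1 p.2 t
        - 3*(px u p.1 p.2 t)^2 - (py u p.1 p.2 t)^2
        - 2*(1+p.1)*py u p.1 p.2 t*px (py u) p.1 p.2 t) := by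
    apply Continuous.sub
    apply Continuous.sub
    apply Continuous.sub
    · exact (((c0.pow 2).add (continuous_const.mul (c0.pow 3))).add
        ((((continuous_const.mul cone).mul c0).mul (continuous_const.add c0)).mul cx)).add
        (((continuous_const.mul cone).mul c0).mul cxxx)
    · exact continuous_const.mul (cx.pow 2)
    · exact cy.pow 2
    · exact ((continuous_const.mul cone).mul cy).mul cxy
  have cDPsi : Continuous (fun p : ℝ × ℝ =>
      2*(1+p.1)*py u p.1 p.2 t*px (py u) p.1 p.2 t
        + 2*(1+p.1)*u p.1 p.2 t*px (py (py u)) p.1 p.2 t) :=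
    (((continuous_const.mul cone).mul cy).mul cxy).add (((continuous_const.mul cone).mul c0).mul cxyy)
  -- FTC in x : the Φ-part
  have intDPhi : (∫ p in Ioo 0 L ×ˢ Ioo (-B) B,
        (u p.1 p.2 t^2 + 2/3*u p.1 p.2 t^3
          + 2*(1+p.1)*u p.1 p.2 t*(1+u p.1 p.2 t)*px u p.1 p.2 t
          + 2*(1+p.1)*u p.1 p.2 t*px (px (px u)) p.1 p.2 t
          - 3*(px u p.1 p.2 t)^2 - (py u p.1 p.2 t)^2
          - 2*(1+p.1)*py u p.1 p.2 t*px (py u) p.1 p.2 t))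
      = ∫ y in Ioo (-B) B, (deriv (fun x' => u x' y t) 0) ^ 2 := by
    refine Eq.trans (setInt_eq_iter' _ cDPhi) ?_
    refine setIntegral_congr_fun measurableSet_Ioo (fun y hy => ?_)
    have hyI : y ∈ Icc (-B) B := Ioo_subset_Icc_self hy
    obtain ⟨hb0, hbL, hbLx⟩ := hbx y hyI t htI
    have hpxL : px u L y t = 0 := hbLx
    have hpyL : py u L y t = 0 :=
      deriv_zero_on hy (fun z hz => (hbx z (Ioo_subset_Icc_self hz) t htI).2.1)
    have hpy0 : py u 0 y t = 0 :=
      deriv_zero_on hy (fun z hz => (hbx z (Ioo_subset_Icc_self hz) t htI).1)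
    have hcont : Continuous (fun x : ℝ =>
        u x y t^2 + 2/3*u x y t^3
          + 2*(1+x)*u x y t*(1+u x y t)*px u x y t
          + 2*(1+x)*u x y t*px (px (px u)) x y t
          - 3*(px u x y t)^2 - (py u x y t)^2
          - 2*(1+x)*py u x y t*px (py u) x y t) :=
      cDPhi.comp (continuous_id.prodMk continuous_const)
    have h2 := integral_Ioo_deriv (f := fun x => (1+x)*(u x y t^2 + 2/3*u x y t^3)
        + 2*(1+x)*u x y t*px (px u) x y t
        - 2*u x y t*px u x y t - (1+x)*(px u x y t)^2 - (1+x)*(py u x y t)^2)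
      hL.le (fun x => L1 hsm y t x) hcont
    refine h2.trans ?_
    show _ = (px u 0 y t) ^ 2
    simp only [hb0, hbL, hpxL, hpyL, hpy0]
    ring
  -- FTC in y : the Ψ-part
  have intDPsi : (∫ p in Ioo 0 L ×ˢ Ioo (-B) B,
        (2*(1+p.1)*py u p.1 p.2 t*px (py u) p.1 p.2 t
          + 2*(1+p.1)*u p.1 p.2 t*px (py (py u)) p.1 p.2 t)) = 0 := by
    refine Eq.trans (setInt_eq_iter _ cDPsi) ?_
    have h : ∀ x ∈ Ioo 0 L, (∫ y in Ioo (-B) B,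
        (2*(1+x)*py u x y t*px (py u) x y t
          + 2*(1+x)*u x y t*px (py (py u)) x y t)) = 0 := by
      intro x hx
      obtain ⟨hbm, hbp⟩ := hby x (Ioo_subset_Icc_self hx) t htI
      have hcont : Continuous (fun y : ℝ =>
          2*(1+x)*py u x y t*px (py u) x y t
            + 2*(1+x)*u x y t*px (py (py u)) x y t) :=
        cDPsi.comp (continuous_const.prodMk continuous_id)
      have h2 := integral_Ioo_deriv (f := fun y => 2*(1+x)*u x y t*px (py u) x y t)
        (by linarith : -B ≤ B) (fun y => L2 hsm x t y) hcont
      refine h2.trans ?_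
      simp only [hbm, hbp]
      ring
    calc (∫ x in Ioo 0 L, ∫ y in Ioo (-B) B,
          (2*(1+x)*py u x y t*px (py u) x y t
            + 2*(1+x)*u x y t*px (py (py u)) x y t))
        = ∫ _x in Ioo 0 L, (0:ℝ) := setIntegral_congr_fun measurableSet_Ioo h
      _ = 0 := by simp
  -- energy derivative
  have hE : deriv (fun s => ∫ x in Ioo 0 L, ∫ y in Ioo (-B) B, (1 + x) * (u x y s) ^ 2) t
      = ∫ p in Ioo 0 L ×ˢ Ioo (-B) B, (1 + p.1) * (2 * u p.1 p.2 t * pt u p.1 p.2 t) := by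
    have hfun : (fun s => ∫ x in Ioo 0 L, ∫ y in Ioo (-B) B, (1 + x) * (u x y s) ^ 2)
        = fun s => ∫ p in Ioo 0 L ×ˢ Ioo (-B) B, (1 + p.1) * u p.1 p.2 s ^ 2 := by
      funext s
      exact (setInt_eq_iter _
        ((continuous_const.add continuous_fst).mul ((cont_slice hsm s).pow 2))).symm
    rw [hfun]
    exact (hasDerivAt_energy hsm L B t).deriv
  -- substitute the PDE
  have hsub : (∫ p in Ioo 0 L ×ˢ Ioo (-B) B, (1 + p.1) * (2 * u p.1 p.2 t * pt u p.1 p.2 t))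
      = ∫ p in Ioo 0 L ×ˢ Ioo (-B) B,
          (-(u p.1 p.2 t^2 + 2/3*u p.1 p.2 t^3
            + 2*(1+p.1)*u p.1 p.2 t*(1+u p.1 p.2 t)*px u p.1 p.2 t
            + 2*(1+p.1)*u p.1 p.2 t*px (px (px u)) p.1 p.2 t
            - 3*(px u p.1 p.2 t)^2 - (py u p.1 p.2 t)^2
            - 2*(1+p.1)*py u p.1 p.2 t*px (py u) p.1 p.2 t)
          - (2*(1+p.1)*py u p.1 p.2 t*px (py u) p.1 p.2 t
            + 2*(1+p.1)*u p.1 p.2 t*px (py (py u)) p.1 p.2 t)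
          - 3*(px u p.1 p.2 t)^2 - (py u p.1 p.2 t)^2
          + (u p.1 p.2 t)^2 + 2/3*(u p.1 p.2 t)^3) := by
    refine setIntegral_congr_fun (measurableSet_Ioo.prod measurableSet_Ioo) (fun p hp => ?_)
    have h := hpde' p.1 hp.1 p.2 hp.2
    have hpt : pt u p.1 p.2 t = -((1 + u p.1 p.2 t) * px u p.1 p.2 t
        + px (px (px u)) p.1 p.2 t + px (py (py u)) p.1 p.2 t) := by linarith
    rw [hpt]; ring
  -- split the integral by linearity
  have iDPhi := integrableOn_rect (a := 0) (b := L) (c := -B) (d := B) cDPhi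
  have iDPsi := integrableOn_rect (a := 0) (b := L) (c := -B) (d := B) cDPsi
  have i2 : IntegrableOn (fun p : ℝ × ℝ => (u p.1 p.2 t)^2) (Ioo 0 L ×ˢ Ioo (-B) B) := integrableOn_rect (a := 0) (b := L) (c := -B) (d := B) (c0.pow 2)
  have i3 := integrableOn_rect (a := 0) (b := L) (c := -B) (d := B) (c0.pow 3)
  have ix2 := integrableOn_rect (a := 0) (b := L) (c := -B) (d := B) (cx.pow 2)
  have iy2 : IntegrableOn (fun p : ℝ × ℝ => (py u p.1 p.2 t)^2) (Ioo 0 L ×ˢ Ioo (-B) B) := integrableOn_rect (a := 0) (b := L) (c := -B) (d := B) (cy.pow 2)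
  have hIneg : IntegrableOn (fun p : ℝ × ℝ => -(u p.1 p.2 t^2 + 2/3*u p.1 p.2 t^3
            + 2*(1+p.1)*u p.1 p.2 t*(1+u p.1 p.2 t)*px u p.1 p.2 t
            + 2*(1+p.1)*u p.1 p.2 t*px (px (px u)) p.1 p.2 t
            - 3*(px u p.1 p.2 t)^2 - (py u p.1 p.2 t)^2
            - 2*(1+p.1)*py u p.1 p.2 t*px (py u) p.1 p.2 t)) (Ioo 0 L ×ˢ Ioo (-B) B) := iDPhi.neg
  have hIa : IntegrableOn (fun p : ℝ × ℝ => -(u p.1 p.2 t^2 + 2/3*u p.1 p.2 t^3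
            + 2*(1+p.1)*u p.1 p.2 t*(1+u p.1 p.2 t)*px u p.1 p.2 t
            + 2*(1+p.1)*u p.1 p.2 t*px (px (px u)) p.1 p.2 t
            - 3*(px u p.1 p.2 t)^2 - (py u p.1 p.2 t)^2
            - 2*(1+p.1)*py u p.1 p.2 t*px (py u) p.1 p.2 t) - (2*(1+p.1)*py u p.1 p.2 t*px (py u) p.1 p.2 t
            + 2*(1+p.1)*u p.1 p.2 t*px (py (py u)) p.1 p.2 t)) (Ioo 0 L ×ˢ Ioo (-B) B) := hIneg.sub iDPsi
  have hI3c : IntegrableOn (fun p : ℝ × ℝ => 3*(px u p.1 p.2 t)^2) (Ioo 0 L ×ˢ Ioo (-B) B) := ix2.const_mul 3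
  have hI23 : IntegrableOn (fun p : ℝ × ℝ => 2/3*(u p.1 p.2 t)^3) (Ioo 0 L ×ˢ Ioo (-B) B) := i3.const_mul (2/3)
  have hIb : IntegrableOn (fun p : ℝ × ℝ => -(u p.1 p.2 t^2 + 2/3*u p.1 p.2 t^3
            + 2*(1+p.1)*u p.1 p.2 t*(1+u p.1 p.2 t)*px u p.1 p.2 t
            + 2*(1+p.1)*u p.1 p.2 t*px (px (px u)) p.1 p.2 t
            - 3*(px u p.1 p.2 t)^2 - (py u p.1 p.2 t)^2
            - 2*(1+p.1)*py u p.1 p.2 t*px (py u) p.1 p.2 t) - (2*(1+p.1)*py u p.1 p.2 t*px (py u) p.1 p.2 t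
            + 2*(1+p.1)*u p.1 p.2 t*px (py (py u)) p.1 p.2 t) - 3*(px u p.1 p.2 t)^2) (Ioo 0 L ×ˢ Ioo (-B) B) := hIa.sub hI3c
  have hIc : IntegrableOn (fun p : ℝ × ℝ => -(u p.1 p.2 t^2 + 2/3*u p.1 p.2 t^3
            + 2*(1+p.1)*u p.1 p.2 t*(1+u p.1 p.2 t)*px u p.1 p.2 t
            + 2*(1+p.1)*u p.1 p.2 t*px (px (px u)) p.1 p.2 t
            - 3*(px u p.1 p.2 t)^2 - (py u p.1 p.2 t)^2
            - 2*(1+p.1)*py u p.1 p.2 t*px (py u) p.1 p.2 t) - (2*(1+p.1)*py u p.1 p.2 t*px (py u) p.1 p.2 t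
            + 2*(1+p.1)*u p.1 p.2 t*px (py (py u)) p.1 p.2 t) - 3*(px u p.1 p.2 t)^2 - (py u p.1 p.2 t)^2) (Ioo 0 L ×ˢ Ioo (-B) B) := hIb.sub iy2
  have hId : IntegrableOn (fun p : ℝ × ℝ => -(u p.1 p.2 t^2 + 2/3*u p.1 p.2 t^3
            + 2*(1+p.1)*u p.1 p.2 t*(1+u p.1 p.2 t)*px u p.1 p.2 t
            + 2*(1+p.1)*u p.1 p.2 t*px (px (px u)) p.1 p.2 t
            - 3*(px u p.1 p.2 t)^2 - (py u p.1 p.2 t)^2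
            - 2*(1+p.1)*py u p.1 p.2 t*px (py u) p.1 p.2 t) - (2*(1+p.1)*py u p.1 p.2 t*px (py u) p.1 p.2 t
            + 2*(1+p.1)*u p.1 p.2 t*px (py (py u)) p.1 p.2 t) - 3*(px u p.1 p.2 t)^2 - (py u p.1 p.2 t)^2 + (u p.1 p.2 t)^2) (Ioo 0 L ×ˢ Ioo (-B) B) := hIc.add i2
  have hsplit : (∫ p in Ioo 0 L ×ˢ Ioo (-B) B,
          (-(u p.1 p.2 t^2 + 2/3*u p.1 p.2 t^3
            + 2*(1+p.1)*u p.1 p.2 t*(1+u p.1 p.2 t)*px u p.1 p.2 t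
            + 2*(1+p.1)*u p.1 p.2 t*px (px (px u)) p.1 p.2 t
            - 3*(px u p.1 p.2 t)^2 - (py u p.1 p.2 t)^2
            - 2*(1+p.1)*py u p.1 p.2 t*px (py u) p.1 p.2 t)
          - (2*(1+p.1)*py u p.1 p.2 t*px (py u) p.1 p.2 t
            + 2*(1+p.1)*u p.1 p.2 t*px (py (py u)) p.1 p.2 t)
          - 3*(px u p.1 p.2 t)^2 - (py u p.1 p.2 t)^2
          + (u p.1 p.2 t)^2 + 2/3*(u p.1 p.2 t)^3))
      = -(∫ p in Ioo 0 L ×ˢ Ioo (-B) B,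
            (u p.1 p.2 t^2 + 2/3*u p.1 p.2 t^3
              + 2*(1+p.1)*u p.1 p.2 t*(1+u p.1 p.2 t)*px u p.1 p.2 t
              + 2*(1+p.1)*u p.1 p.2 t*px (px (px u)) p.1 p.2 t
              - 3*(px u p.1 p.2 t)^2 - (py u p.1 p.2 t)^2
              - 2*(1+p.1)*py u p.1 p.2 t*px (py u) p.1 p.2 t))
        - (∫ p in Ioo 0 L ×ˢ Ioo (-B) B,
            (2*(1+p.1)*py u p.1 p.2 t*px (py u) p.1 p.2 t
              + 2*(1+p.1)*u p.1 p.2 t*px (py (py u)) p.1 p.2 t))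
        - 3*(∫ p in Ioo 0 L ×ˢ Ioo (-B) B, (px u p.1 p.2 t)^2)
        - (∫ p in Ioo 0 L ×ˢ Ioo (-B) B, (py u p.1 p.2 t)^2)
        + (∫ p in Ioo 0 L ×ˢ Ioo (-B) B, (u p.1 p.2 t)^2)
        + 2/3*(∫ p in Ioo 0 L ×ˢ Ioo (-B) B, (u p.1 p.2 t)^3) := by
    rw [MeasureTheory.integral_add hId hI23,
        MeasureTheory.integral_add hIc i2,
        MeasureTheory.integral_sub hIb iy2,
        MeasureTheory.integral_sub hIa hI3c,
        MeasureTheory.integral_sub hIneg iDPsi,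
        MeasureTheory.integral_neg, MeasureTheory.integral_const_mul,
        MeasureTheory.integral_const_mul]
  -- convert the goal's iterated integrals to product-set integrals
  have hIX : (∫ x in Ioo 0 L, ∫ y in Ioo (-B) B, (deriv (fun x' => u x' y t) x) ^ 2)
      = ∫ p in Ioo 0 L ×ˢ Ioo (-B) B, (px u p.1 p.2 t)^2 :=
    (setInt_eq_iter _ (cx.pow 2)).symm
  have hIY : (∫ x in Ioo 0 L, ∫ y in Ioo (-B) B, (deriv (fun y' => u x y' t) y) ^ 2)
      = ∫ p in Ioo 0 L ×ˢ Ioo (-B) B, (py u p.1 p.2 t)^2 :=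
    (setInt_eq_iter _ (cy.pow 2)).symm
  have hI2 : (∫ x in Ioo 0 L, ∫ y in Ioo (-B) B, (u x y t) ^ 2)
      = ∫ p in Ioo 0 L ×ˢ Ioo (-B) B, (u p.1 p.2 t)^2 :=
    (setInt_eq_iter _ (c0.pow 2)).symm
  have hI3 : (∫ x in Ioo 0 L, ∫ y in Ioo (-B) B, (u x y t) ^ 3)
      = ∫ p in Ioo 0 L ×ˢ Ioo (-B) B, (u p.1 p.2 t)^3 :=
    (setInt_eq_iter _ (c0.pow 3)).symm
  rw [hE, hsub, hsplit, intDPhi, intDPsi, hIX, hIY, hI2, hI3]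
  ring
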